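/- The Lebesgue measure (length) of the O¹-cylindrical set with base (c_1, c_2, …, c_m) equals 1/(σ_1 σ_2 ⋯ σ_m (σ_m + 1)), where σ_k = c_1 + c_2 + ⋯ + c_k. -/
import Mathlib


/-- `σ_k = c_1 + ⋯ + c_k` (0-indexed symbols `c 0, …, c (k-1)`). -/
noncomputable def osig (c : ℕ → ℕ) (k : ℕ) : ℝ := ∑ i ∈ Finset.range k, (c i : ℝ)

/-- Finite `Ō¹`-sum: `Ō¹(c_1,…,c_m) = ∑_{n=1}^m (−1)^{n−1}/(σ_1 σ_2 ⋯ σ_n)`. -/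
noncomputable def bO1fin (c : ℕ → ℕ) (m : ℕ) : ℝ :=
  ∑ n ∈ Finset.range m, (-1 : ℝ) ^ n / ∏ k ∈ Finset.range (n + 1), osig c (k + 1)

/-- The length of the O¹-cylinder with base `(c_1,…,c_m)`, i.e. the
distance between `Ō¹(c_1,…,c_m)` and `Ō¹(c_1,…,c_m + 1)`, equals
`1/(σ_1 σ_2 ⋯ σ_m (σ_m + 1))`. -/
theorem o1_cylinder_length (m : ℕ) (hm : 1 ≤ m) (c : ℕ → ℕ) (hc : ∀ i, 0 < c i) :
    |bO1fin c m - bO1fin (fun i => if i = m - 1 then c i + 1 else c i) m| =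
      1 / ((∏ k ∈ Finset.range m, osig c (k + 1)) * (osig c m + 1)) := by
  obtain ⟨M, rfl⟩ : ∃ M, m = M + 1 := ⟨m - 1, (Nat.succ_pred_eq_of_pos hm).symm⟩
  simp only [Nat.add_sub_cancel]
  set c' : ℕ → ℕ := fun i => if i = M then c i + 1 else c i with hc'
  have hsig : ∀ k, k ≤ M → osig c' k = osig c k := by
    intro k hk
    unfold osig
    apply Finset.sum_congr rfl
    intro i hi
    have : i ≠ M := by have := Finset.mem_range.mp hi; omega
    simp [hc', this]
  have hsigM : osig c' (M + 1) = osig c (M + 1) + 1 := by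
    unfold osig
    rw [Finset.sum_range_succ, Finset.sum_range_succ]
    have h : ∀ i ∈ Finset.range M, ((c' i : ℝ)) = (c i : ℝ) := by
      intro i hi
      have : i ≠ M := by have := Finset.mem_range.mp hi; omega
      simp [hc', this]
    rw [Finset.sum_congr rfl h]
    simp [hc']
    ring
  have hpos : ∀ k, 0 < osig c (k + 1) := by
    intro k
    unfold osig
    apply Finset.sum_pos
    · intro i _; exact_mod_cast hc i
    · exact Finset.nonempty_range_add_one
  set P : ℝ := ∏ k ∈ Finset.range M, osig c (k + 1) with hP
  have hPpos : 0 < P := Finset.prod_pos fun k _ => hpos k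
  set S : ℝ := osig c (M + 1) with hS
  have hSpos : 0 < S := hpos M
  have hprod : ∀ n ∈ Finset.range M,
      ∏ k ∈ Finset.range (n + 1), osig c' (k + 1)
        = ∏ k ∈ Finset.range (n + 1), osig c (k + 1) := by
    intro n hn
    apply Finset.prod_congr rfl
    intro k hk
    exact hsig (k + 1)
      (by have := Finset.mem_range.mp hn; have := Finset.mem_range.mp hk; omega)
  have hdiff : bO1fin c (M + 1) - bO1fin c' (M + 1) =
      (-1) ^ M / (P * S) - (-1) ^ M / (P * (S + 1)) := by
    unfold bO1fin
    rw [Finset.sum_range_succ, Finset.sum_range_succ]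
    have h1 : ∑ n ∈ Finset.range M, (-1 : ℝ) ^ n / ∏ k ∈ Finset.range (n + 1), osig c' (k + 1)
        = ∑ n ∈ Finset.range M, (-1 : ℝ) ^ n / ∏ k ∈ Finset.range (n + 1), osig c (k + 1) := by
      apply Finset.sum_congr rfl
      intro n hn
      rw [hprod n hn]
    rw [h1, Finset.prod_range_succ, Finset.prod_range_succ]
    have h2 : ∏ k ∈ Finset.range M, osig c' (k + 1) = P := by
      apply Finset.prod_congr rfl
      intro k hk
      exact hsig (k + 1) (by have := Finset.mem_range.mp hk; omega)
    rw [h2, hsigM]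
    ring
  rw [hdiff, Finset.prod_range_succ]
  have hPne : P ≠ 0 := ne_of_gt hPpos
  have hSne : S ≠ 0 := ne_of_gt hSpos
  have hS1 : S + 1 ≠ 0 := by positivity
  have key : (-1 : ℝ) ^ M / (P * S) - (-1) ^ M / (P * (S + 1))
      = (-1) ^ M * (1 / (P * S * (S + 1))) := by
    field_simp
    ring
  rw [key, abs_mul, abs_pow, abs_neg, abs_one, one_pow, one_mul, abs_of_pos]
  positivity
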